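/- If t is a real number with t ≠ 0 that is not an eigenvalue of B' (i.e., det(B' − tI) ≠ 0), then det(B − tI) / det(B' − tI) = t^{2d} · det(I + (1/t²)(B' − tI)^{-1} X), where B is the NB-matrix of G, B' is its block indexed by directed edges not incident to a node c of degree d, and X = DFE. -/

import Mathlib

open Matrix

/-- The non-backtracking matrix of a simple graph `G`: rows and columns are indexed by
darts (directed edges); entry `(k→l, i→j)` is `δ_{jk} (1 - δ_{il})`. -/
def nbMatrix {V : Type*} [DecidableEq V] (G : SimpleGraph V) :
    Matrix G.Dart G.Dart ℝ := fun r c =>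
  (if c.toProd.2 = r.toProd.1 then (1 : ℝ) else 0) *
  (if c.toProd.1 = r.toProd.2 then 0 else 1)

/-- Darts (directed edges) not incident to the node `c`. -/
abbrev NonIncDart {V : Type*} (G : SimpleGraph V) (c : V) :=
  {e : G.Dart // e.toProd.1 ≠ c ∧ e.toProd.2 ≠ c}

/-- Darts (directed edges) incident to the node `c`. -/
abbrev IncDart {V : Type*} (G : SimpleGraph V) (c : V) :=
  {e : G.Dart // e.toProd.1 = c ∨ e.toProd.2 = c}

/-- The block `B'` of the NB-matrix: rows and columns indexed by darts not incident to `c`. -/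
def blockB' {V : Type*} [DecidableEq V] (G : SimpleGraph V) (c : V) :
    Matrix (NonIncDart G c) (NonIncDart G c) ℝ := fun r s => nbMatrix G r.val s.val

/-- The block `D`: rows indexed by darts not incident to `c`, columns by darts incident to `c`. -/
def blockD {V : Type*} [DecidableEq V] (G : SimpleGraph V) (c : V) :
    Matrix (NonIncDart G c) (IncDart G c) ℝ := fun r s => nbMatrix G r.val s.val

/-- The block `E`: rows indexed by darts incident to `c`, columns by darts not incident to `c`. -/
def blockE {V : Type*} [DecidableEq V] (G : SimpleGraph V) (c : V) :
    Matrix (IncDart G c) (NonIncDart G c) ℝ := fun r s => nbMatrix G r.val s.val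

/-- The block `F`: rows and columns indexed by darts incident to `c`. -/
def blockF {V : Type*} [DecidableEq V] (G : SimpleGraph V) (c : V) :
    Matrix (IncDart G c) (IncDart G c) ℝ := fun r s => nbMatrix G r.val s.val

/-- The matrix `X = D F E`, indexed by darts not incident to `c`. -/
def blockX {V : Type*} [Fintype V] [DecidableEq V] (G : SimpleGraph V) [DecidableRel G.Adj]
    (c : V) : Matrix (NonIncDart G c) (NonIncDart G c) ℝ :=
  blockD G c * blockF G c * blockE G c

/-!
Order the darts so that those incident to `c` come last; then `B - t` is the block matrix
`[[B' - t, D], [E, F - t]]`. A non-backtracking walk cannot take two consecutive steps on darts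
incident to `c`, nor pass through such a dart between two darts avoiding `c`; hence `F² = 0`
and `DE = 0`. So `(F - t)⁻¹ = -(F + t)/t²`, the Schur complement of `F - t` is
`B' - t + DFE/t²`, and `det (F - t) = (-t)^{2d}` because `F` is nilpotent.
-/

namespace Matrix

variable {m n : Type*} [Fintype m] [Fintype n] [DecidableEq m] [DecidableEq n]

section IsDomain

variable {R : Type*} [CommRing R] [IsDomain R]

theorem charpoly_eq_X_pow_of_isNilpotent {N : Matrix n n R} (hN : IsNilpotent N) :
    N.charpoly = Polynomial.X ^ Fintype.card n :=
  sub_eq_zero.mp (isNilpotent_charpoly_sub_pow_of_isNilpotent hN).eq_zero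

theorem det_sub_smul_one_of_isNilpotent {N : Matrix n n R} (hN : IsNilpotent N) (t : R) :
    (N - t • 1).det = (-t) ^ Fintype.card n := by
  have h := congr_arg (Polynomial.eval t) (charpoly_eq_X_pow_of_isNilpotent hN)
  rw [eval_charpoly, Polynomial.eval_pow, Polynomial.eval_X] at h
  rw [← neg_sub, det_neg, smul_one_eq_diagonal, ← scalar_apply, h]
  ring

end IsDomain

variable {K : Type*} [Field K]

theorem sub_smul_one_mul_of_mul_self_eq_zero {N : Matrix n n K} (hN : N * N = 0) {t : K}
    (ht : t ≠ 0) : (N - t • 1) * ((-(t ^ 2)⁻¹) • (N + t • 1)) = 1 := by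
  have h : (N - t • 1) * (N + t • 1) = (-t ^ 2) • 1 := by
    simp only [sub_mul, mul_add, hN, Matrix.mul_smul, Matrix.smul_mul, mul_one, one_mul,
      smul_smul]
    module
  rw [Matrix.mul_smul, h, smul_smul, neg_mul_neg, inv_mul_cancel₀ (pow_ne_zero 2 ht), one_smul]

theorem det_fromBlocks_sub_smul_one_of_mul_self_eq_zero (A : Matrix m m K) {B : Matrix m n K}
    {C : Matrix n m K} {D : Matrix n n K} (hD : D * D = 0) (hBC : B * C = 0) {t : K}
    (ht : t ≠ 0) :
    (fromBlocks A B C (D - t • 1)).det =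
      (-t) ^ Fintype.card n * (A + (t ^ 2)⁻¹ • (B * D * C)).det := by
  have hinv := sub_smul_one_mul_of_mul_self_eq_zero hD ht
  let := invertibleOfRightInverse _ _ hinv
  rw [det_fromBlocks₂₂, invOf_eq_right_inv hinv,
    det_sub_smul_one_of_isNilpotent ⟨2, by rw [sq, hD]⟩, Matrix.mul_smul, Matrix.smul_mul, Matrix.mul_add, Matrix.add_mul, Matrix.mul_smul,
    Matrix.mul_one, Matrix.smul_mul, hBC, smul_zero, add_zero, neg_smul, sub_neg_eq_add]

theorem det_add_eq_det_mul_det_one_add {A : Matrix n n K} (hA : A.det ≠ 0) (M : Matrix n n K) :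
    (A + M).det = A.det * (1 + A⁻¹ * M).det := by
  rw [← det_mul, mul_add, mul_nonsing_inv_cancel_left _ _ (isUnit_iff_ne_zero.mpr hA), mul_one]

end Matrix

section NonBacktracking

variable {V : Type*} [DecidableEq V] (G : SimpleGraph V) (c : V)

lemma nbMatrix_apply (r s : G.Dart) :
    nbMatrix G r s = if s.snd = r.fst ∧ s.fst ≠ r.snd then 1 else 0 := by
  unfold nbMatrix
  split_ifs <;> simp_all

def dartEquivSum : NonIncDart G c ⊕ IncDart G c ≃ G.Dart :=
  ((Equiv.subtypeEquivRight fun _ => not_or.symm).sumCongr (Equiv.refl _)).trans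
    ((Equiv.sumComm _ _).trans (Equiv.sumCompl _))

lemma nbMatrix_submatrix_dartEquivSum :
    (nbMatrix G).submatrix (dartEquivSum G c) (dartEquivSum G c) =
      fromBlocks (blockB' G c) (blockD G c) (blockE G c) (blockF G c) := by
  ext (i | i) (j | j) <;> rfl

lemma nbMatrix_sub_smul_one_submatrix_dartEquivSum (t : ℝ) :
    (nbMatrix G - t • 1).submatrix (dartEquivSum G c) (dartEquivSum G c) =
      fromBlocks (blockB' G c - t • 1) (blockD G c) (blockE G c) (blockF G c - t • 1) := by
  change (nbMatrix G).submatrix _ _ - t • (1 : Matrix G.Dart G.Dart ℝ).submatrix _ _ = _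
  rw [submatrix_one_equiv, nbMatrix_submatrix_dartEquivSum, ← fromBlocks_one, fromBlocks_smul,
    sub_eq_add_neg, fromBlocks_neg, fromBlocks_add]
  simp only [smul_zero, neg_zero, add_zero, ← sub_eq_add_neg]

variable [Fintype V] [DecidableRel G.Adj]

lemma blockF_mul_self : blockF G c * blockF G c = 0 := by
  ext ⟨r, hr⟩ ⟨s, hs⟩
  refine Finset.sum_eq_zero fun ⟨b, hb⟩ _ => ?_
  simp only [blockF, nbMatrix_apply]
  grind [SimpleGraph.Dart.fst_ne_snd]

lemma blockD_mul_blockE : blockD G c * blockE G c = 0 := by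
  ext ⟨r, hr⟩ ⟨s, hs⟩
  refine Finset.sum_eq_zero fun ⟨b, hb⟩ _ => ?_
  simp only [blockD, blockE, nbMatrix_apply]
  grind

lemma card_dart_fst_eq_degree : Fintype.card {d : G.Dart // d.fst = c} = G.degree c := by
  rw [Fintype.card_subtype, G.dart_fst_fiber_card_eq_degree]

lemma card_dart_snd_eq_degree : Fintype.card {d : G.Dart // d.snd = c} = G.degree c := by
  rw [← card_dart_fst_eq_degree]
  exact Fintype.card_congr ((SimpleGraph.Dart.symm_involutive.toPerm _).subtypeEquiv
    fun _ => Iff.rfl)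

lemma card_incDart : Fintype.card (IncDart G c) = 2 * G.degree c := by
  rw [Fintype.card_subtype_or_disjoint _ _ ?_, card_dart_fst_eq_degree, card_dart_snd_eq_degree,
    two_mul]
  exact fun _ hfst hsnd d hd => d.fst_ne_snd ((hfst d hd).trans (hsnd d hd).symm)

end NonBacktracking

theorem det_ratio_nbMatrix {V : Type*} [Fintype V] [DecidableEq V]
    (G : SimpleGraph V) [DecidableRel G.Adj] (c : V) (t : ℝ) (ht : t ≠ 0)
    (ht' : (blockB' G c - t • 1).det ≠ 0) :
    (nbMatrix G - t • 1).det / (blockB' G c - t • 1).det =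
      t ^ (2 * G.degree c) *
        (1 + (t ^ 2)⁻¹ • ((blockB' G c - t • 1)⁻¹ * blockX G c)).det := by
  have hdet : (nbMatrix G - t • 1).det =
      t ^ (2 * G.degree c) * (blockB' G c - t • 1 + (t ^ 2)⁻¹ • blockX G c).det := by
    rw [← det_submatrix_equiv_self (dartEquivSum G c),
      nbMatrix_sub_smul_one_submatrix_dartEquivSum,
      det_fromBlocks_sub_smul_one_of_mul_self_eq_zero _ (blockF_mul_self G c)
        (blockD_mul_blockE G c) ht, card_incDart, (even_two_mul _).neg_pow]
    rfl
  rw [hdet, det_add_eq_det_mul_det_one_add ht', Matrix.mul_smul, mul_left_comm,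
    mul_div_cancel_left₀ _ ht']
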